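/- arXiv:2305.15632 — 2 statements merged into one kernel-verified Lean document; each statement's English description precedes it below -/
import Mathlib

section
/- In the synchronous vertex process of discrete incremental voting on an arbitrary finite graph G with minimum degree at least 1, the degree-biased weight process (Z(t))_{t≥0}, where Z(t) = n Σ_{v∈V} π_v X_v(t) and π_v = d(v)/(2m), is a martingale with respect to the natural filtration of the process: E[Z(t+1) | X(t)] = Z(t) for every t ≥ 0. -/
/-!
Vertex `v` moves towards a uniformly random neighbour, so its expected new opinion is
`x v + (1 / d(v)) ∑_{w ∼ v} (update(x v, x w) - x v)`. The weight `π_v = d(v) / 2m` cancels the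
`1 / d(v)`, so the expected change of `Z` is `n / 2m` times the sum of the increments over all
ordered adjacent pairs `(v, w)`. That sum vanishes because the increment of `v` towards `w` is
the negative of the increment of `w` towards `v`.
-/

namespace IncrementalVoting2

/-- The incremental voting update rule. -/
def updateRule (a b : ℤ) : ℤ := if a < b then a + 1 else if b < a then a - 1 else a

/-- Expected value of a real-valued function under a probability mass function. -/
noncomputable def expVal {α : Type*} (p : PMF α) (f : α → ℝ) : ℝ :=
  ∑' a, (p a).toReal * f a

variable {V : Type} [Fintype V] [DecidableEq V]

/-- One step of the synchronous vertex process: each vertex `v` independently chooses a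
uniformly random neighbour `c v` and updates using it (all updates use the old opinions).
The joint choice `c` is uniformly distributed on `Π v, neighbours of v`. -/
noncomputable def syncStep (G : SimpleGraph V) [DecidableRel G.Adj]
    (hdeg : ∀ v, 0 < G.degree v) (x : V → ℤ) : PMF (V → ℤ) :=
  haveI : ∀ v : V, Nonempty (G.neighborFinset v) :=
    fun v => (Finset.card_pos.mp (hdeg v)).to_subtype
  (PMF.uniformOfFintype (Π v : V, G.neighborFinset v)).map
    fun c => fun v => updateRule (x v) (x (c v))

/-- The degree-biased weight `Z x = n ∑_v π_v x_v` with `π_v = d(v)/(2m)`. -/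
noncomputable def Z (G : SimpleGraph V) [DecidableRel G.Adj] (x : V → ℤ) : ℝ :=
  (Fintype.card V : ℝ) *
    ∑ v, ((G.degree v : ℝ) / (2 * (G.edgeFinset.card : ℝ))) * (x v : ℝ)

end IncrementalVoting2

theorem Fintype.card_mul_sum_comp_eval {ι : Type*} [Fintype ι] [DecidableEq ι] {A : ι → Type*}
    [∀ i, Fintype (A i)] {R : Type*} [CommSemiring R] (i : ι) (h : A i → R) :
    (Fintype.card (A i) : R) * ∑ c : Π j, A j, h (c i)
      = Fintype.card (Π j, A j) * ∑ a, h a := by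
  have hsplit : ∑ c : Π j, A j, h (c i)
      = Fintype.card (Π j : {j // j ≠ i}, A j) * ∑ a, h a := by
    rw [← (Equiv.piSplitAt i A).symm.sum_comp, Fintype.sum_prod_type]
    simp [Equiv.piSplitAt_symm_apply, Finset.sum_const, Finset.mul_sum]
  rw [hsplit, Fintype.card_congr (Equiv.piSplitAt i A), Fintype.card_prod]
  push_cast
  ring

theorem Fintype.inv_card_mul_sum_pi_sum {ι : Type*} [Fintype ι] [DecidableEq ι]
    {A : ι → Type*} [∀ i, Fintype (A i)] [∀ i, Nonempty (A i)] (F : ∀ i, A i → ℝ) :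
    (Fintype.card (Π i, A i) : ℝ)⁻¹ * ∑ c : Π i, A i, ∑ i, F i (c i)
      = ∑ i, (Fintype.card (A i) : ℝ)⁻¹ * ∑ a, F i a := by
  rw [Finset.sum_comm, Finset.mul_sum]
  refine Finset.sum_congr rfl fun i _ => ?_
  have hAi : (Fintype.card (A i) : ℝ) ≠ 0 := by exact_mod_cast Fintype.card_ne_zero
  have hA : (Fintype.card (Π i, A i) : ℝ) ≠ 0 := by exact_mod_cast Fintype.card_ne_zero
  field_simp
  linear_combination card_mul_sum_comp_eval (R := ℝ) i (F i)

theorem SimpleGraph.sum_sum_neighborFinset_eq_zero_of_antisymm {V : Type*} [Fintype V]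
    (G : SimpleGraph V) [DecidableRel G.Adj] {M : Type*} [AddCommGroup M] [IsAddTorsionFree M]
    (f : V → V → M) (hf : ∀ v w, G.Adj v w → f w v = -f v w) :
    ∑ v, ∑ w ∈ G.neighborFinset v, f v w = 0 := by
  classical
  simp only [neighborFinset_eq_filter, Finset.sum_filter]
  rw [← self_eq_neg, ← Finset.sum_neg_distrib, Finset.sum_comm]
  refine Fintype.sum_congr _ _ fun w => ?_
  rw [← Finset.sum_neg_distrib]
  refine Fintype.sum_congr _ _ fun v => ?_
  by_cases hvw : G.Adj v w
  · simp [hvw, hvw.symm, hf v w hvw]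
  · have hwv : ¬G.Adj w v := fun h => hvw h.symm
    simp [hvw, hwv]

namespace IncrementalVoting2

open Finset SimpleGraph

theorem expVal_map {α β : Type*} [Fintype α] (p : PMF α) (g : α → β) (f : β → ℝ) :
    expVal (p.map g) f = ∑ a, (p a).toReal * f (g a) := by
  classical
  have hterm : ∀ b, ((p.map g) b).toReal * f b
      = ∑ a, if b = g a then (p a).toReal * f (g a) else 0 := by
    intro b
    rw [PMF.map_apply, tsum_fintype,
      ENNReal.toReal_sum fun a _ => by split_ifs <;> simp [p.apply_ne_top], sum_mul]
    refine sum_congr rfl fun a _ => ?_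
    split_ifs with h <;> simp [h]
  simp_rw [expVal, hterm]
  rw [Summable.tsum_finsetSum fun a _ => (hasSum_ite_eq (g a) _).summable]
  simp only [tsum_ite_eq]

theorem updateRule_sub_self_antisymm (a b : ℤ) : updateRule b a - b = -(updateRule a b - a) := by
  unfold updateRule
  split_ifs <;> omega

variable {V : Type} [Fintype V]

theorem sum_sum_neighborFinset_updateRule (G : SimpleGraph V) [DecidableRel G.Adj] (x : V → ℤ) :
    ∑ v, ∑ w ∈ G.neighborFinset v, (updateRule (x v) (x w) : ℝ)
      = ∑ v, (G.degree v : ℝ) * x v := by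
  have hdarts : ∑ v, ∑ w ∈ G.neighborFinset v, ((updateRule (x v) (x w) : ℝ) - x v) = 0 :=
    G.sum_sum_neighborFinset_eq_zero_of_antisymm _ fun v w _ => by
      exact_mod_cast updateRule_sub_self_antisymm (x v) (x w)
  simpa [sum_sub_distrib, sub_eq_zero] using hdarts

variable [DecidableEq V]

theorem expVal_syncStep (G : SimpleGraph V) [DecidableRel G.Adj] (hdeg : ∀ v, 0 < G.degree v)
    (x : V → ℤ) (F : (V → ℤ) → ℝ) :
    expVal (syncStep G hdeg x) F
      = (Fintype.card (Π v, G.neighborFinset v) : ℝ)⁻¹ *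
          ∑ c : Π v, G.neighborFinset v, F fun v => updateRule (x v) (x (c v)) := by
  rw [syncStep, expVal_map, mul_sum]
  simp [PMF.uniformOfFintype_apply]

theorem expVal_syncStep_Z (G : SimpleGraph V) [DecidableRel G.Adj] (hdeg : ∀ v, 0 < G.degree v)
    (x : V → ℤ) :
    expVal (syncStep G hdeg x) (Z G)
      = Fintype.card V / (2 * #G.edgeFinset) *
          ∑ v, ∑ w ∈ G.neighborFinset v, (updateRule (x v) (x w) : ℝ) := by
  have : ∀ v, Nonempty (G.neighborFinset v) := fun v => (card_pos.mp (hdeg v)).to_subtype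
  let F (v w : V) : ℝ :=
    Fintype.card V * (G.degree v / (2 * #G.edgeFinset) * updateRule (x v) (x w))
  calc expVal (syncStep G hdeg x) (Z G)
      = (Fintype.card (Π v, G.neighborFinset v) : ℝ)⁻¹ *
          ∑ c : Π v, G.neighborFinset v, ∑ v, F v (c v) := by
        rw [expVal_syncStep]
        simp only [Z, F, mul_sum]
    _ = ∑ v, (Fintype.card (G.neighborFinset v) : ℝ)⁻¹ * ∑ w : G.neighborFinset v, F v w :=
        Fintype.inv_card_mul_sum_pi_sum (A := fun v => G.neighborFinset v) fun v w => F v w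
    _ = _ := by
        rw [mul_sum]
        refine sum_congr rfl fun v _ => ?_
        have hdv : (G.degree v : ℝ) ≠ 0 := by exact_mod_cast (hdeg v).ne'
        rw [Fintype.card_coe, card_neighborFinset_eq_degree,
          sum_coe_sort (G.neighborFinset v) (F v)]
        simp only [F, ← mul_sum]
        field_simp

/-- **The degree-biased weight is a martingale for the synchronous vertex process**:
the conditional expectation of `Z(t+1)` given `X(t) = x` equals `Z x`, for any
finite graph with minimum degree at least 1. -/
theorem sync_vertex_process_degree_biased_weight_martingale
    (G : SimpleGraph V) [DecidableRel G.Adj] (hdeg : ∀ v, 0 < G.degree v) (x : V → ℤ) :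
    expVal (syncStep G hdeg x) (Z G) = Z G x := by
  rw [expVal_syncStep_Z, sum_sum_neighborFinset_updateRule, Z, mul_sum, mul_sum]
  exact sum_congr rfl fun v _ => by ring

end IncrementalVoting2
end

section
/- Properties of G_{n,p}, edges between large sets: let G ∈ G_{n,p} with np ≥ (log n)^{1+ε} for some constant ε > 0, and let δ ≥ 5/√(np). Then with high probability, simultaneously for every pair of disjoint vertex sets A, B with |A| ≥ δn and |B| ≥ δn, the number X_{AB} of edges of G between A and B satisfies μ/2 ≤ X_{AB} ≤ 3μ/2, where μ = |A|·|B|·p. -/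
/-!
Fix disjoint `A`, `B` with `|A|, |B| ≥ δn`. Since `δ √(np) ≥ 5`, the mean `μ = |A||B|p` is at
least `δ²n²p ≥ 25n`. The count `X_{AB}` is a sum of `|A||B|` independent Bernoulli(`p`) edge
indicators, so the Chernoff bound at `t = ±1/2` gives `P(X_{AB} ∉ [μ/2, 3μ/2]) ≤ 2e^{-μ/12}
≤ 2e^{-25n/12}`. A union bound over the fewer than `4ⁿ` pairs `(A, B)` leaves
`2 (4 e^{-25/12})ⁿ → 0`.
-/

namespace Gnp17

open MeasureTheory

/-- The Erdős–Rényi measure: each pair of distinct vertices is an edge independently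
with probability `p`. -/
noncomputable def gnpMeasure (n : ℕ) (p : ℝ) (h1 : p ≤ 1) :
    Measure (Sym2 (Fin n) → Bool) :=
  Measure.pi fun _ =>
    (PMF.bernoulli (Real.toNNReal p) (by
      simpa using h1)).toMeasure

/-- The random graph determined by `ω`. -/
def graphOf (n : ℕ) (ω : Sym2 (Fin n) → Bool) : SimpleGraph (Fin n) :=
  SimpleGraph.fromRel fun u v => ω s(u, v)

/-- The number of edges of the random graph between the (disjoint) sets `A` and `B`. -/
noncomputable def edgesBetween (n : ℕ) (ω : Sym2 (Fin n) → Bool)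
    (A B : Finset (Fin n)) : ℝ :=
  letI : DecidableRel (graphOf n ω).Adj := Classical.decRel _
  ∑ a ∈ A, ∑ b ∈ B, if (graphOf n ω).Adj a b then (1 : ℝ) else 0

open ProbabilityTheory Real Finset Filter Topology
open scoped NNReal

lemma exp_half_lt : exp (1 / 2) < 5 / 3 := by
  have hsq : exp (1 / 2) * exp (1 / 2) = exp 1 := by rw [← exp_add]; norm_num
  nlinarith [exp_pos (1 / 2), exp_one_lt_d9]

lemma exp_neg_half_lt : exp (-(1 / 2)) < 2 / 3 := by
  have hsq : exp (-(1 / 2)) * exp (-(1 / 2)) = exp (-1) := by rw [← exp_add]; norm_num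
  nlinarith [exp_pos (-(1 / 2)), exp_neg_one_lt_d9]

section Chernoff

variable {ι : Type*} [Fintype ι] {q : ℝ≥0} (hq : q ≤ 1)

def countTrue (E : Finset ι) (ω : ι → Bool) : ℝ := ∑ e ∈ E, if ω e then 1 else 0

lemma mgf_bernoulli_indicator (t : ℝ) :
    mgf (fun b : Bool => if b then (1 : ℝ) else 0) (PMF.bernoulli q hq).toMeasure t
      = q * exp t + (1 - q) := by
  simp [mgf, PMF.integral_eq_sum, PMF.bernoulli_apply, hq]

lemma mgf_countTrue (E : Finset ι) (t : ℝ) :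
    mgf (countTrue E) (Measure.pi fun _ : ι => (PMF.bernoulli q hq).toMeasure) t
      = (q * exp t + (1 - q)) ^ #E := by
  have hsum : countTrue E = ∑ e ∈ E, fun ω : ι → Bool => if ω e then (1 : ℝ) else 0 := by
    ext ω; simp [countTrue]
  have hindep := iIndepFun_pi (μ := fun _ : ι => (PMF.bernoulli q hq).toMeasure)
    (X := fun _ (b : Bool) => if b then (1 : ℝ) else 0)
    fun _ => (measurable_of_finite _).aemeasurable
  rw [hsum, hindep.mgf_sum (fun _ => measurable_of_finite _), Finset.prod_eq_pow_card]
  intro e _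
  rw [← mgf_bernoulli_indicator hq t]
  exact integral_comp_eval (μ := fun _ : ι => (PMF.bernoulli q hq).toMeasure)
    (f := fun b : Bool => exp (t * if b then (1 : ℝ) else 0))
    (measurable_of_finite _).aestronglyMeasurable

lemma mgf_countTrue_le (E : Finset ι) (t : ℝ) :
    mgf (countTrue E) (Measure.pi fun _ : ι => (PMF.bernoulli q hq).toMeasure) t
      ≤ exp (#E * q * (exp t - 1)) := by
  have hbase : q * exp t + (1 - q) ≤ exp (q * (exp t - 1)) := by
    linarith [add_one_le_exp (q * (exp t - 1))]
  have hq' : (q : ℝ) ≤ 1 := by exact_mod_cast hq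
  rw [mgf_countTrue, mul_assoc, exp_nat_mul]
  exact pow_le_pow_left₀ (by positivity) hbase _

lemma measureReal_countTrue_ge_le (E : Finset ι) :
    (Measure.pi fun _ : ι => (PMF.bernoulli q hq).toMeasure).real
        {ω | 3 * (#E * q) / 2 ≤ countTrue E ω} ≤ exp (-(#E * q / 12)) := by
  set μ : ℝ := #E * q
  calc _ ≤ exp (-(1 / 2) * (3 * μ / 2)) * mgf (countTrue E) _ (1 / 2) :=
        measure_ge_le_exp_mul_mgf _ (by norm_num) (.of_finite)
    _ ≤ exp (-(1 / 2) * (3 * μ / 2)) * exp (μ * (exp (1 / 2) - 1)) := by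
        gcongr; exact mgf_countTrue_le hq E _
    _ ≤ exp (-(μ / 12)) := by
        rw [← exp_add]
        gcongr
        nlinarith [exp_half_lt, show 0 ≤ μ by positivity]

lemma measureReal_countTrue_le_le (E : Finset ι) :
    (Measure.pi fun _ : ι => (PMF.bernoulli q hq).toMeasure).real
        {ω | countTrue E ω ≤ #E * q / 2} ≤ exp (-(#E * q / 12)) := by
  set μ : ℝ := #E * q
  calc _ ≤ exp (-(-(1 / 2)) * (μ / 2)) * mgf (countTrue E) _ (-(1 / 2)) :=
        measure_le_le_exp_mul_mgf _ (by norm_num) (.of_finite)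
    _ ≤ exp (-(-(1 / 2)) * (μ / 2)) * exp (μ * (exp (-(1 / 2)) - 1)) := by
        gcongr; exact mgf_countTrue_le hq E _
    _ ≤ exp (-(μ / 12)) := by
        rw [← exp_add]
        gcongr
        nlinarith [exp_neg_half_lt, show 0 ≤ μ by positivity]

lemma measureReal_countTrue_far_le (E : Finset ι) :
    (Measure.pi fun _ : ι => (PMF.bernoulli q hq).toMeasure).real
        {ω | ¬ (#E * q / 2 ≤ countTrue E ω ∧ countTrue E ω ≤ 3 * (#E * q) / 2)}
      ≤ 2 * exp (-(#E * q / 12)) := by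
  have hsub : {ω | ¬ (#E * q / 2 ≤ countTrue E ω ∧ countTrue E ω ≤ 3 * (#E * q) / 2)}
      ⊆ {ω | countTrue E ω ≤ #E * q / 2} ∪ {ω | 3 * (#E * q) / 2 ≤ countTrue E ω} := by
    intro ω hω
    simp only [Set.mem_ofPred_eq, not_and_or, not_le] at hω
    rcases hω with h | h
    · exact .inl h.le
    · exact .inr h.le
  refine (measureReal_mono hsub (measure_ne_top _ _)).trans <| (measureReal_union_le _ _).trans ?_
  linarith [measureReal_countTrue_le_le hq E, measureReal_countTrue_ge_le hq E]

end Chernoff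

def crossPairs {α : Type*} [DecidableEq α] (A B : Finset α) : Finset (Sym2 α) :=
  (A ×ˢ B).image fun x => s(x.1, x.2)

lemma injOn_sym2Mk_product {α : Type*} {A B : Finset α} (hAB : Disjoint A B) :
    Set.InjOn (fun x : α × α => s(x.1, x.2)) ↑(A ×ˢ B) := by
  rintro ⟨a₁, b₁⟩ h₁ ⟨a₂, b₂⟩ h₂ h
  simp only [coe_product, Set.mem_prod, mem_coe] at h₁ h₂
  rcases Sym2.eq_iff.mp h with ⟨rfl, rfl⟩ | ⟨rfl, rfl⟩
  · rfl
  · exact absurd h₂.1 (disjoint_right.mp hAB h₁.2)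

lemma card_crossPairs {α : Type*} [DecidableEq α] {A B : Finset α} (hAB : Disjoint A B) :
    #(crossPairs A B) = #A * #B := by
  rw [crossPairs, card_image_of_injOn (injOn_sym2Mk_product hAB), card_product]

lemma edgesBetween_eq_countTrue {n : ℕ} {A B : Finset (Fin n)} (hAB : Disjoint A B)
    (ω : Sym2 (Fin n) → Bool) :
    edgesBetween n ω A B = countTrue (crossPairs A B) ω := by
  rw [countTrue, crossPairs, sum_image (injOn_sym2Mk_product hAB), sum_product, edgesBetween]
  refine sum_congr rfl fun a ha => sum_congr rfl fun b hb => ?_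
  have hne : a ≠ b := fun h => disjoint_left.mp hAB ha (h ▸ hb)
  simp [graphOf, hne, Sym2.eq_swap (a := b)]

lemma measureReal_edgesBetween_far_le {n : ℕ} {p : ℝ} (hp0 : 0 ≤ p) (hp1 : p ≤ 1)
    {A B : Finset (Fin n)} (hAB : Disjoint A B) :
    (gnpMeasure n p hp1).real {ω | ¬ ((#A : ℝ) * #B * p / 2 ≤ edgesBetween n ω A B ∧
        edgesBetween n ω A B ≤ 3 * ((#A : ℝ) * #B * p) / 2)}
      ≤ 2 * exp (-((#A : ℝ) * #B * p / 12)) := by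
  have h := measureReal_countTrue_far_le (q := p.toNNReal) (by simpa using hp1) (crossPairs A B)
  simp only [card_crossPairs hAB, Nat.cast_mul, Real.coe_toNNReal p hp0] at h
  simp only [edgesBetween_eq_countTrue hAB]
  exact h

lemma twentyFive_mul_le_of_five_div_sqrt_le {n p δ a b : ℝ} (hn : 0 ≤ n) (hnp : 0 < n * p)
    (hδ : 5 / √(n * p) ≤ δ) (ha : δ * n ≤ a) (hb : δ * n ≤ b) : 25 * n ≤ a * b * p := by
  have hs : 0 < √(n * p) := sqrt_pos.mpr hnp
  have hδs : 5 ≤ δ * √(n * p) := (div_le_iff₀ hs).mp hδ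
  have hp : 0 < p := pos_of_mul_pos_right hnp hn
  have hδn : 0 ≤ δ * n := mul_nonneg (by nlinarith) hn
  have h25 : 25 ≤ (δ * √(n * p)) ^ 2 := by nlinarith
  calc 25 * n ≤ n * (δ * √(n * p)) ^ 2 := by nlinarith [mul_le_mul_of_nonneg_left h25 hn]
    _ = (δ * n) * (δ * n) * p := by rw [mul_pow, sq_sqrt hnp.le]; ring
    _ ≤ a * b * p := by gcongr; exact hδn.trans ha

instance {n : ℕ} {p : ℝ} (hp1 : p ≤ 1) : IsProbabilityMeasure (gnpMeasure n p hp1) := by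
  rw [gnpMeasure]; infer_instance

def balancedEvent (n : ℕ) (p δ : ℝ) : Set (Sym2 (Fin n) → Bool) :=
  {ω | ∀ A B : Finset (Fin n), Disjoint A B → δ * n ≤ (#A : ℝ) → δ * n ≤ (#B : ℝ) →
    (#A : ℝ) * #B * p / 2 ≤ edgesBetween n ω A B ∧
      edgesBetween n ω A B ≤ 3 * ((#A : ℝ) * #B * p) / 2}

lemma measureReal_compl_balancedEvent_le {n : ℕ} {p δ : ℝ} (hp0 : 0 ≤ p) (hp1 : p ≤ 1)
    (hnp : 0 < n * p) (hδ : 5 / √(n * p) ≤ δ) :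
    (gnpMeasure n p hp1).real (balancedEvent n p δ)ᶜ ≤ 2 * (4 * exp (-(25 / 12))) ^ n := by
  classical
  set largePairs := univ.filter fun AB : Finset (Fin n) × Finset (Fin n) =>
    Disjoint AB.1 AB.2 ∧ δ * n ≤ (#AB.1 : ℝ) ∧ δ * n ≤ (#AB.2 : ℝ)
  have hsub : (balancedEvent n p δ)ᶜ ⊆ ⋃ AB ∈ largePairs,
      {ω | ¬ ((#AB.1 : ℝ) * #AB.2 * p / 2 ≤ edgesBetween n ω AB.1 AB.2 ∧
        edgesBetween n ω AB.1 AB.2 ≤ 3 * ((#AB.1 : ℝ) * #AB.2 * p) / 2)} := by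
    intro ω hω
    simp only [balancedEvent, Set.mem_compl_iff, Set.mem_ofPred_eq, not_forall] at hω
    obtain ⟨A, B, hAB, hA, hB, hfar⟩ := hω
    exact Set.mem_biUnion (x := (A, B)) (by simp [largePairs, hAB, hA, hB]) hfar
  have hpair : ∀ AB ∈ largePairs, (gnpMeasure n p hp1).real
      {ω | ¬ ((#AB.1 : ℝ) * #AB.2 * p / 2 ≤ edgesBetween n ω AB.1 AB.2 ∧
        edgesBetween n ω AB.1 AB.2 ≤ 3 * ((#AB.1 : ℝ) * #AB.2 * p) / 2)}
        ≤ 2 * exp (-(25 * n / 12)) := by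
    rintro ⟨A, B⟩ hAB
    simp only [largePairs, mem_filter, mem_univ, true_and] at hAB
    obtain ⟨hAB, hA, hB⟩ := hAB
    have hμ := twentyFive_mul_le_of_five_div_sqrt_le (Nat.cast_nonneg n) hnp hδ hA hB
    refine (measureReal_edgesBetween_far_le hp0 hp1 hAB).trans ?_
    gcongr
  calc _ ≤ ∑ AB ∈ largePairs, 2 * exp (-(25 * n / 12)) :=
        (measureReal_mono hsub (measure_ne_top _ _)).trans <|
          (measureReal_biUnion_finset_le _ _).trans (sum_le_sum hpair)
    _ ≤ ∑ _AB : Finset (Fin n) × Finset (Fin n), 2 * exp (-(25 * n / 12)) :=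
        sum_le_sum_of_subset_of_nonneg (subset_univ _) fun _ _ _ => by positivity
    _ = 2 * (4 * exp (-(25 / 12))) ^ n := by
        rw [sum_const, card_univ, Fintype.card_prod, Fintype.card_finset, Fintype.card_fin,
          nsmul_eq_mul, mul_pow, ← exp_nat_mul]
        have h4 : (2 : ℝ) ^ n * 2 ^ n = 4 ^ n := by rw [← mul_pow]; norm_num
        push_cast
        rw [h4]
        ring_nf

lemma four_mul_exp_neg_lt_one : 4 * exp (-(25 / 12)) < 1 := by
  have h2 : exp 2 ≤ exp (25 / 12) := exp_le_exp.mpr (by norm_num)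
  have hsq : exp 1 * exp 1 = exp 2 := by rw [← exp_add]; norm_num
  rw [exp_neg, ← div_eq_mul_inv, div_lt_one (exp_pos _)]
  nlinarith [exp_one_gt_d9]

theorem gnp_edges_between_large_sets_general
    (ε : ℝ)
    (p : ℕ → ℝ) (hp0 : ∀ n, 0 ≤ p n) (hp1 : ∀ n, p n ≤ 1)
    (hnp : ∀ n : ℕ, (Real.log n) ^ ((1 : ℝ) + ε) ≤ n * p n)
    (δ : ℕ → ℝ) (hδ : ∀ n, 5 / Real.sqrt (n * p n) ≤ δ n) :
    Filter.Tendsto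
      (fun n =>
        (gnpMeasure n (p n) (hp1 n)
          {ω | ∀ A B : Finset (Fin n), Disjoint A B →
            δ n * n ≤ (A.card : ℝ) → δ n * n ≤ (B.card : ℝ) →
            (A.card : ℝ) * B.card * p n / 2 ≤ edgesBetween n ω A B ∧
              edgesBetween n ω A B ≤ 3 * ((A.card : ℝ) * B.card * p n) / 2}).toReal)
      Filter.atTop (nhds 1) := by
  set r := 4 * exp (-(25 / 12))
  have hr : Tendsto (fun n : ℕ => 2 * r ^ n) atTop (𝓝 0) := by
    simpa using (tendsto_pow_atTop_nhds_zero_of_lt_one (by positivity)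
      four_mul_exp_neg_lt_one).const_mul 2
  have hnp_pos : ∀ n ≥ 2, 0 < n * p n := fun n hn =>
    (rpow_pos_of_pos (log_pos (by exact_mod_cast hn)) _).trans_le (hnp n)
  have hbad : Tendsto (fun n => (gnpMeasure n (p n) (hp1 n)).real
      (balancedEvent n (p n) (δ n))ᶜ) atTop (𝓝 0) :=
    squeeze_zero' (.of_forall fun _ => measureReal_nonneg) (eventually_atTop.mpr ⟨2, fun n hn =>
      measureReal_compl_balancedEvent_le (hp0 n) (hp1 n) (hnp_pos n hn) (hδ n)⟩) hr
  have hgood := hbad.const_sub 1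
  simp only [sub_zero, probReal_compl_eq_one_sub (Set.toFinite _).measurableSet,
    sub_sub_cancel] at hgood
  exact hgood

/-- **Edge counts between large disjoint sets in `G_{n,p}`**: if `np ≥ (log n)^{1+ε}`
and `δ ≥ 5/√(np)`, then w.h.p. every pair of disjoint sets `A, B` of sizes at least
`δn` spans between `μ/2` and `3μ/2` edges, where `μ = |A||B|p`. -/
theorem gnp_edges_between_large_sets
    (ε : ℝ) (hε : 0 < ε)
    (p : ℕ → ℝ) (hp0 : ∀ n, 0 ≤ p n) (hp1 : ∀ n, p n ≤ 1)
    (hnp : ∀ n : ℕ, (Real.log n) ^ ((1 : ℝ) + ε) ≤ n * p n)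
    (δ : ℕ → ℝ) (hδ : ∀ n, 5 / Real.sqrt (n * p n) ≤ δ n) :
    Filter.Tendsto
      (fun n =>
        (gnpMeasure n (p n) (hp1 n)
          {ω | ∀ A B : Finset (Fin n), Disjoint A B →
            δ n * n ≤ (A.card : ℝ) → δ n * n ≤ (B.card : ℝ) →
            (A.card : ℝ) * B.card * p n / 2 ≤ edgesBetween n ω A B ∧
              edgesBetween n ω A B ≤ 3 * ((A.card : ℝ) * B.card * p n) / 2}).toReal)
      Filter.atTop (nhds 1) :=
  gnp_edges_between_large_sets_general ε p hp0 hp1 hnp δ hδ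

end Gnp17
end
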